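/- arXiv:2204.00356 — 5 statements merged into one kernel-verified Lean document; each statement's English description precedes it below -/
import Mathlib

section
/- Let A be an n×n real tridiagonal matrix with arbitrary diagonal entries a_1,...,a_n and all off-diagonal (sub- and super-diagonal) entries equal to -1. For any proper contiguous index subset S = {k, k+1, ..., l} ⊊ {1,...,n}, the smallest eigenvalue of A is strictly less than the smallest eigenvalue of the principal submatrix A_S obtained by keeping rows and columns with indices in S. -/
open Matrix

def trid {n : ℕ} (a : Fin n → ℝ) : Matrix (Fin n) (Fin n) ℝ :=
  Matrix.of fun i j => if i = j then a i else if i.1 + 1 = j.1 ∨ j.1 + 1 = i.1 then -1 else 0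

def IsSmallestEig {n : ℕ} (A : Matrix (Fin n) (Fin n) ℝ) (lam : ℝ) : Prop :=
  (∃ v, v ≠ 0 ∧ A.mulVec v = lam • v) ∧
    ∀ μ : ℝ, (∃ v, v ≠ 0 ∧ A.mulVec v = μ • v) → lam ≤ μ

lemma trid_symm {n : ℕ} (a : Fin n → ℝ) : (trid a).IsHermitian := by
  ext i j
  simp only [Matrix.conjTranspose_apply, trid, Matrix.of_apply, star_trivial]
  rcases eq_or_ne i j with rfl | h
  · simp
  · rw [if_neg (Ne.symm h), if_neg h]
    simp only [or_comm]

lemma trid_neg_one {n : ℕ} (a : Fin n → ℝ) (i j : Fin n)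
    (h : i.1 = j.1 + 1 ∨ j.1 = i.1 + 1) : trid a i j = -1 := by
  simp only [trid, Matrix.of_apply]
  rw [if_neg (by simp only [Fin.ext_iff]; omega), if_pos (by omega)]

lemma trid_zero {n : ℕ} (a : Fin n → ℝ) (i j : Fin n)
    (h1 : i.1 ≠ j.1) (h2 : i.1 ≠ j.1 + 1) (h3 : j.1 ≠ i.1 + 1) : trid a i j = 0 := by
  simp only [trid, Matrix.of_apply]
  rw [if_neg (by simp only [Fin.ext_iff]; omega), if_neg (by omega)]

def emb (n k s : ℕ) (hks : k + s ≤ n) : Fin s ↪ Fin n :=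
  ⟨fun q => ⟨k + q.1, Nat.lt_of_lt_of_le (Nat.add_lt_add_left q.isLt k) hks⟩, by
    intro p q hpq
    simp only [Fin.ext_iff] at hpq ⊢
    omega⟩

/-- For a real tridiagonal matrix with off-diagonal entries -1, the smallest eigenvalue
is strictly smaller than that of any proper contiguous principal submatrix
`A_S`, `S = {k, …, k+s-1} ⊊ {1, …, n}`. -/
theorem stmt_0 (n : ℕ) (a : Fin n → ℝ) (k s : ℕ) (hs : 0 < s) (hks : k + s ≤ n)
    (hproper : s < n) (la ls : ℝ)
    (hla : IsSmallestEig (trid a) la)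
    (hls : IsSmallestEig
      ((trid a).submatrix (fun i : Fin s => (⟨k + i.1, by omega⟩ : Fin n))
        (fun i : Fin s => (⟨k + i.1, by omega⟩ : Fin n))) ls) :
    la < ls := by
  classical
  have hA : (trid a).IsHermitian := trid_symm a
  -- B := trid a - la • 1 is positive semidefinite
  have hBH : (trid a - la • (1 : Matrix (Fin n) (Fin n) ℝ)).IsHermitian := by
    apply hA.sub
    simp [Matrix.IsHermitian]
  have hBpsd : (trid a - la • (1 : Matrix (Fin n) (Fin n) ℝ)).PosSemidef := by
    apply hBH.posSemidef_iff_eigenvalues_nonneg.mpr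
    intro i
    have hv := hBH.mulVec_eigenvectorBasis i
    have hvne : (⇑(hBH.eigenvectorBasis i) : Fin n → ℝ) ≠ 0 := by
      intro hc
      exact hBH.eigenvectorBasis.orthonormal.ne_zero i (by ext j; exact congrFun hc j)
    have hAv : trid a *ᵥ ⇑(hBH.eigenvectorBasis i)
        = (hBH.eigenvalues i + la) • ⇑(hBH.eigenvectorBasis i) := by
      have h2 : trid a *ᵥ ⇑(hBH.eigenvectorBasis i)
          = (trid a - la • 1) *ᵥ ⇑(hBH.eigenvectorBasis i)
            + la • ⇑(hBH.eigenvectorBasis i) := by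
        rw [Matrix.sub_mulVec, Matrix.smul_mulVec, Matrix.one_mulVec, sub_add_cancel]
      rw [h2, hv, add_smul]
    have := hla.2 (hBH.eigenvalues i + la) ⟨_, hvne, hAv⟩
    rw [Pi.zero_apply]
    linarith
  -- the eigenvector of the submatrix, extended by zero
  obtain ⟨u, hu0, huM⟩ := hls.1
  set w : Fin n → ℝ := fun i => if h : k ≤ i.1 ∧ i.1 < k + s then u ⟨i.1 - k, by omega⟩ else 0
    with hwdef
  have hw_in : ∀ (i : Fin n) (h : k ≤ i.1 ∧ i.1 < k + s), w i = u ⟨i.1 - k, by omega⟩ := by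
    intro i h; exact dif_pos h
  have hw_out : ∀ (i : Fin n), ¬(k ≤ i.1 ∧ i.1 < k + s) → w i = 0 := by
    intro i h; exact dif_neg h
  have hw0 : w ≠ 0 := by
    obtain ⟨q, hq⟩ := Function.ne_iff.mp hu0
    intro hc
    apply hq
    have h1 : w ⟨k + q.1, by omega⟩ = 0 := by rw [hc]; rfl
    rw [hw_in ⟨k + q.1, by omega⟩
      (show k ≤ k + q.1 ∧ k + q.1 < k + s by have := q.isLt; omega)] at h1
    convert h1 using 2
    simp only [Fin.ext_iff]
    omega
    rfl
  -- key computation on rows inside S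
  have key : ∀ (i : Fin n), k ≤ i.1 → i.1 < k + s → (trid a *ᵥ w) i = ls * w i := by
    intro i h1 h2
    have hM := congrFun huM ⟨i.1 - k, by omega⟩
    simp only [Matrix.mulVec, dotProduct, Matrix.submatrix_apply, Pi.smul_apply,
      smul_eq_mul] at hM ⊢
    have hterm : ∀ q : Fin s, trid a i ((emb n k s hks) q) * w ((emb n k s hks) q)
        = trid a ⟨k + (⟨i.1 - k, by omega⟩ : Fin s).1, by have := (⟨i.1 - k, by omega⟩ : Fin s).isLt; omega⟩
            ⟨k + q.1, by have := q.isLt; omega⟩ * u q := by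
      intro q
      have he : (emb n k s hks) q = ⟨k + q.1, by have := q.isLt; omega⟩ := rfl
      have hw' : w ((emb n k s hks) q) = u q := by
        rw [he, hw_in ⟨k + q.1, by have := q.isLt; omega⟩
          (show k ≤ k + q.1 ∧ k + q.1 < k + s by have := q.isLt; omega)]
        congr 1
        simp only [Fin.ext_iff]
        omega
      rw [hw']
      congr 1
      rw [he]
      congr 1
      simp only [Fin.ext_iff]
      omega
    calc ∑ j : Fin n, trid a i j * w j
        = ∑ j ∈ Finset.univ.map (emb n k s hks), trid a i j * w j := by
          symm
          apply Finset.sum_subset (Finset.subset_univ _)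
          intro j _ hj
          have hjn : ¬(k ≤ j.1 ∧ j.1 < k + s) := by
            intro hc
            apply hj
            refine Finset.mem_map.mpr ⟨⟨j.1 - k, by omega⟩, Finset.mem_univ _, ?_⟩
            simp only [emb, Function.Embedding.coeFn_mk, Fin.ext_iff]
            show k + (j.1 - k) = j.1
            omega
          rw [hw_out j hjn, mul_zero]
      _ = ∑ q : Fin s, trid a i ((emb n k s hks) q) * w ((emb n k s hks) q) :=
          Finset.sum_map Finset.univ (emb n k s hks) (fun j => trid a i j * w j)
      _ = ls * u ⟨i.1 - k, by omega⟩ := by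
          rw [Finset.sum_congr rfl (fun q _ => hterm q)]
          exact hM
      _ = ls * w i := by rw [hw_in i ⟨h1, h2⟩]
  -- quadratic form value
  have hq : w ⬝ᵥ (trid a *ᵥ w) = ls * (w ⬝ᵥ w) := by
    simp only [dotProduct, Finset.mul_sum]
    refine Finset.sum_congr rfl fun i _ => ?_
    by_cases h : k ≤ i.1 ∧ i.1 < k + s
    · rw [key i h.1 h.2]; ring
    · rw [hw_out i h]; ring
  have hwpos : (0:ℝ) < w ⬝ᵥ w := by
    obtain ⟨i, hi⟩ := Function.ne_iff.mp hw0
    exact Finset.sum_pos' (fun j _ => mul_self_nonneg _)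
      ⟨i, Finset.mem_univ i, mul_self_pos.mpr hi⟩
  have hBq : w ⬝ᵥ ((trid a - la • 1) *ᵥ w) = (ls - la) * (w ⬝ᵥ w) := by
    rw [Matrix.sub_mulVec, dotProduct_sub, hq, Matrix.smul_mulVec,
      Matrix.one_mulVec, dotProduct_smul, smul_eq_mul]
    ring
  have hle : la ≤ ls := by
    have h0 := hBpsd.dotProduct_mulVec_nonneg w
    rw [star_trivial, hBq] at h0
    nlinarith
  rcases lt_or_eq_of_le hle with h | heq
  · exact h
  exfalso
  have hzero : w ⬝ᵥ ((trid a - la • 1) *ᵥ w) = 0 := by rw [hBq, ← heq]; ring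
  have hker : (trid a - la • 1) *ᵥ w = 0 := by
    rw [← (hBpsd.dotProduct_mulVec_zero_iff w), star_trivial]
    exact hzero
  have hAw : trid a *ᵥ w = la • w := by
    rw [Matrix.sub_mulVec, Matrix.smul_mulVec, Matrix.one_mulVec, sub_eq_zero] at hker
    exact hker
  -- step lemmas
  have stepDown : ∀ (i j : Fin n), i.1 = j.1 + 1 → (∀ j' : Fin n, i.1 ≤ j'.1 → w j' = 0) →
      w j = 0 := by
    intro i j hij hz
    have h1 : (trid a *ᵥ w) i = la * w i := by rw [hAw]; rfl
    have h2 : w i = 0 := hz i le_rfl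
    have h3 : (trid a *ᵥ w) i = - w j := by
      simp only [Matrix.mulVec, dotProduct]
      rw [Finset.sum_eq_single j]
      · rw [trid_neg_one a i j (Or.inl hij)]; ring
      · intro j' _ hj'
        by_cases hge : i.1 ≤ j'.1
        · rw [hz j' hge, mul_zero]
        · rw [trid_zero a i j' (by omega) (by simp only [ne_eq, Fin.ext_iff] at hj'; omega)
            (by omega), zero_mul]
      · intro h; exact absurd (Finset.mem_univ j) h
    rw [h1, h2, mul_zero] at h3
    linarith [h3]
  have stepUp : ∀ (i j : Fin n), j.1 = i.1 + 1 → (∀ j' : Fin n, j'.1 ≤ i.1 → w j' = 0) →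
      w j = 0 := by
    intro i j hij hz
    have h1 : (trid a *ᵥ w) i = la * w i := by rw [hAw]; rfl
    have h2 : w i = 0 := hz i le_rfl
    have h3 : (trid a *ᵥ w) i = - w j := by
      simp only [Matrix.mulVec, dotProduct]
      rw [Finset.sum_eq_single j]
      · rw [trid_neg_one a i j (Or.inr hij)]; ring
      · intro j' _ hj'
        by_cases hle' : j'.1 ≤ i.1
        · rw [hz j' hle', mul_zero]
        · rw [trid_zero a i j' (by omega) (by omega)
            (by simp only [ne_eq, Fin.ext_iff] at hj'; omega), zero_mul]
      · intro h; exact absurd (Finset.mem_univ j) h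
    rw [h1, h2, mul_zero] at h3
    linarith [h3]
  have hw_all : ∀ j : Fin n, w j = 0 := by
    by_cases hcase : k + s < n
    · have main : ∀ m, ∀ j : Fin n, k + s - m ≤ j.1 → w j = 0 := by
        intro m
        induction m with
        | zero => intro j hj; exact hw_out j (by omega)
        | succ m ih =>
          intro j hj
          by_cases h' : k + s - m ≤ j.1
          · exact ih j h'
          · by_cases hk : k ≤ j.1
            · refine stepDown ⟨j.1 + 1, by omega⟩ j rfl (fun j' hj' => ih j' ?_)
              have hj'' : j.1 + 1 ≤ j'.1 := hj'
              omega
            · exact hw_out j (by omega)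
      intro j; exact main (k + s) j (by omega)
    · have hk0 : 0 < k := by omega
      have main : ∀ m, ∀ j : Fin n, j.1 < m → w j = 0 := by
        intro m
        induction m with
        | zero => intro j hj; omega
        | succ m ih =>
          intro j hj
          by_cases h' : j.1 < m
          · exact ih j h'
          · by_cases hk : k ≤ j.1 ∧ j.1 < k + s
            · refine stepUp ⟨j.1 - 1, by omega⟩ j (show j.1 = j.1 - 1 + 1 by omega)
                (fun j' hj' => ih j' ?_)
              have hj'' : j'.1 ≤ j.1 - 1 := hj'
              omega
            · exact hw_out j hk
      intro j; exact main n j j.isLt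
  exact hw0 (funext hw_all)
end

section
/- Let P be the path graph on vertices v₁, ..., vₙ (edges between consecutive vertices) and let f : V(P) → ℤ_{≥0}. Suppose f(v₁) = 0 or f(vₙ) = 0. Then the second smallest eigenvalue of the Laplacian of the cone CP^f is strictly less than 1. -/
noncomputable def lap {V : Type*} [Fintype V] [DecidableEq V] (w : V → V → ℝ) :
    Matrix V V ℝ :=
  Matrix.of fun i j => if i = j then (∑ k, w k i) - w i i else - w j i

/-- The `j`-th smallest (0-indexed) real part among the eigenvalues of `M`
(counted with multiplicity); `lamRe M 1` is Re(λ₂). -/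
noncomputable def lamRe {ι : Type*} [Fintype ι] [DecidableEq ι] (M : Matrix ι ι ℝ)
    (j : ℕ) : ℝ :=
  (((M.map (fun x : ℝ => (x : ℂ))).charpoly.roots.map Complex.re).sort (· ≤ ·)).getD j 0

/-- Adjacency weights of the path graph v₁ ↔ v₂ ↔ ⋯ ↔ vₙ (vertices `Fin n`). -/
def pathW (n : ℕ) : Fin n → Fin n → ℝ :=
  fun i j => if i.1 + 1 = j.1 ∨ j.1 + 1 = i.1 then 1 else 0

/-- Weights of the cone of a weighted digraph: an extra node `none` with an edge of
weight `f v` to every original node `v`. -/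
def coneW {V : Type*} (w : V → V → ℝ) (f : V → ℝ) : Option V → Option V → ℝ
  | none, some v => f v
  | some u, some v => w u v
  | _, _ => 0

open Matrix Polynomial

section Helpers

@[simp] lemma coneW_none_some {V : Type*} (w : V → V → ℝ) (f : V → ℝ) (v : V) :
    coneW w f none (some v) = f v := rfl

@[simp] lemma coneW_some_some {V : Type*} (w : V → V → ℝ) (f : V → ℝ) (u v : V) :
    coneW w f (some u) (some v) = w u v := rfl

@[simp] lemma coneW_some_none {V : Type*} (w : V → V → ℝ) (f : V → ℝ) (u : V) :
    coneW w f (some u) none = 0 := rfl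

@[simp] lemma coneW_none_none {V : Type*} (w : V → V → ℝ) (f : V → ℝ) :
    coneW w f none none = 0 := rfl

lemma pathW_apply (n : ℕ) (i j : Fin n) :
    pathW n i j = if i.1 + 1 = j.1 ∨ j.1 + 1 = i.1 then (1:ℝ) else 0 := rfl

lemma sorted_getD_lt_one (l : List ℝ) (hl : l.Pairwise (· ≤ ·))
    (h2 : 2 ≤ l.countP (fun x => decide (x < 1))) : l.getD 1 0 < 1 := by
  match l, hl, h2 with
  | [], _, h2 => simp at h2
  | [a], _, h2 =>
    have := List.countP_le_length (l := [a]) (p := fun x => decide (x < 1))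
    simp only [List.length_singleton] at this; omega
  | a :: b :: t, hl, h2 =>
    obtain ⟨ha, hb, -⟩ : (∀ z ∈ b :: t, a ≤ z) ∧ (∀ z ∈ t, b ≤ z) ∧ t.Pairwise (· ≤ ·) := by
      rw [List.pairwise_cons, List.pairwise_cons] at hl; tauto
    by_contra hc
    push_neg at hc
    simp only [List.getD_cons_succ, List.getD_cons_zero] at hc
    have ht : t.countP (fun x => decide (x < 1)) = 0 := by
      rw [List.countP_eq_zero]
      intro z hz
      simpa using not_lt.2 (hc.trans (hb z hz))
    rw [List.countP_cons, List.countP_cons, ht] at h2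
    have hbf : ¬ ((fun x => decide (x < 1)) b = true) := by simpa using not_lt.2 hc
    rw [if_neg hbf] at h2
    split_ifs at h2 <;> omega

lemma lamRe_lt_one {ι : Type*} [Fintype ι] [DecidableEq ι] (M : Matrix ι ι ℝ)
    (h2 : 2 ≤ Multiset.countP (fun x => x < 1)
      ((M.map (fun x : ℝ => (x : ℂ))).charpoly.roots.map Complex.re)) : lamRe M 1 < 1 := by
  set s := (M.map (fun x : ℝ => (x : ℂ))).charpoly.roots.map Complex.re with hs
  apply sorted_getD_lt_one _ (Multiset.pairwise_sort (r := (· ≤ ·)) (s := s))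
  have := Multiset.sort_eq (r := (· ≤ ·)) (s := s)
  rw [← this, Multiset.coe_countP] at h2
  exact h2

lemma lamRe_submatrix {ι κ : Type*} [Fintype ι] [DecidableEq ι] [Fintype κ] [DecidableEq κ]
    (M : Matrix ι ι ℝ) (e : κ ≃ ι) (j : ℕ) :
    lamRe (M.submatrix e e) j = lamRe M j := by
  unfold lamRe
  congr 2
  have h1 : (M.submatrix e e).map (fun x : ℝ => (x : ℂ)) =
      (M.map (fun x : ℝ => (x : ℂ))).submatrix e e := rfl
  rw [h1]
  have h2 : (M.map (fun x : ℝ => (x : ℂ))).submatrix ⇑e ⇑e =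
      Matrix.reindex e.symm e.symm (M.map (fun x : ℝ => (x : ℂ))) := by
    ext i j; simp
  rw [h2, Matrix.charpoly_reindex]

lemma charpoly_punit_zero : (0 : Matrix PUnit.{1} PUnit.{1} ℝ).charpoly = X := by
  rw [Matrix.charpoly, Matrix.det_unique, charmatrix_apply_eq]
  simp

lemma charpoly_option {V : Type} [Fintype V] [DecidableEq V]
    (M : Matrix (Option V) (Option V) ℝ) (h : ∀ b, M none b = 0) :
    M.charpoly = (Matrix.of fun i j => M (some i) (some j)).charpoly * X := by
  set eop : V ⊕ PUnit.{1} ≃ Option V := (Equiv.optionEquivSumPUnit V).symm with heop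
  have h2 : M.charpoly = (M.submatrix eop eop).charpoly := by
    rw [show M.submatrix ⇑eop ⇑eop = Matrix.reindex eop.symm eop.symm M from by ext i j; simp,
      Matrix.charpoly_reindex]
  have h1 : M.submatrix eop eop =
      Matrix.fromBlocks (Matrix.of fun i j => M (some i) (some j))
        (Matrix.of fun i (_ : PUnit.{1}) => M (some i) none) 0 0 := by
    ext i j
    rcases i with i | i <;> rcases j with j | j <;>
      simp [heop, Matrix.fromBlocks, h]
  rw [h2, h1, Matrix.charpoly_fromBlocks_zero₂₁, charpoly_punit_zero]

lemma exists_eig_lt {m : Type} [Fintype m] [DecidableEq m] {A : Matrix m m ℝ}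
    (hA : A.IsHermitian) (x : m → ℝ) (hx : x ⬝ᵥ (A *ᵥ x) < x ⬝ᵥ x) :
    ∃ i, hA.eigenvalues i < 1 := by
  by_contra hc
  push_neg at hc
  have hpsd : (A - 1).PosSemidef := by
    have hd : (Matrix.diagonal (fun i => hA.eigenvalues i - 1)).PosSemidef :=
      Matrix.PosSemidef.diagonal (fun i => by simpa using sub_nonneg.2 (hc i))
    have hmm := hd.mul_mul_conjTranspose_same (hA.eigenvectorUnitary : Matrix m m ℝ)
    convert hmm using 1
    have hs := hA.spectral_theorem
    have hofr : (RCLike.ofReal ∘ hA.eigenvalues : m → ℝ) = hA.eigenvalues := by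
      funext i; simp [RCLike.ofReal_real_eq_id]
    rw [hofr, Unitary.conjStarAlgAut_apply, Matrix.star_eq_conjTranspose] at hs
    have hu : (hA.eigenvectorUnitary : Matrix m m ℝ) *
        (hA.eigenvectorUnitary : Matrix m m ℝ)ᴴ = 1 := by
      rw [← Matrix.star_eq_conjTranspose]
      exact (Matrix.mem_unitaryGroup_iff).mp hA.eigenvectorUnitary.2
    have hdd : (Matrix.diagonal fun i => hA.eigenvalues i - 1) =
        (Matrix.diagonal fun i => hA.eigenvalues i) - 1 := by
      ext i j
      rcases eq_or_ne i j with rfl | hij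
      · simp [Matrix.diagonal_apply_eq, Matrix.one_apply_eq]
      · simp [Matrix.diagonal_apply_ne _ hij, Matrix.one_apply_ne hij]
    rw [hdd, Matrix.mul_sub, Matrix.mul_one, Matrix.sub_mul, hu, ← hs]
  have h0 := hpsd.dotProduct_mulVec_nonneg x
  rw [star_trivial, Matrix.sub_mulVec, Matrix.one_mulVec, dotProduct_sub] at h0
  linarith

lemma eig_isRoot {m : Type} [Fintype m] [DecidableEq m] {A : Matrix m m ℝ}
    (hA : A.IsHermitian) (i : m) :
    A.charpoly.IsRoot (hA.eigenvalues i) := by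
  set μ := hA.eigenvalues i with hμ
  have hv := hA.mulVec_eigenvectorBasis i
  have hvne : (⇑(hA.eigenvectorBasis i) : m → ℝ) ≠ 0 := by
    intro h
    apply hA.eigenvectorBasis.orthonormal.ne_zero i
    ext j
    exact congrFun h j
  have hdet : (μ • (1 : Matrix m m ℝ) - A).det = 0 := by
    rw [← Matrix.exists_mulVec_eq_zero_iff]
    refine ⟨_, hvne, ?_⟩
    rw [Matrix.sub_mulVec, Matrix.smul_mulVec, Matrix.one_mulVec, hv, sub_self]
  have heval : A.charpoly.eval μ = (μ • (1 : Matrix m m ℝ) - A).det := by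
    rw [Matrix.charpoly, ← Polynomial.coe_evalRingHom, RingHom.map_det]
    congr 1
    ext a b
    rcases eq_or_ne a b with rfl | hab
    · simp [charmatrix_apply_eq, Matrix.one_apply_eq]
    · simp [charmatrix_apply_ne _ _ _ hab, Matrix.one_apply_ne hab]
  rwa [Polynomial.IsRoot, heval]

lemma quad_two {m : Type} [Fintype m] [DecidableEq m] (A : Matrix m m ℝ) (i0 i1 : m) (ε : ℝ) :
    ((Pi.single i0 1 : m → ℝ) + ε • (Pi.single i1 1 : m → ℝ)) ⬝ᵥ
      (A *ᵥ ((Pi.single i0 1 : m → ℝ) + ε • (Pi.single i1 1 : m → ℝ))) =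
    A i0 i0 + ε * A i0 i1 + ε * A i1 i0 + ε^2 * A i1 i1 := by
  simp [Matrix.mulVec_add, Matrix.mulVec_smul, dotProduct_add, dotProduct_smul,
    add_dotProduct, smul_dotProduct, Matrix.mulVec_single, single_dotProduct]
  ring

lemma quad_one {m : Type} [Fintype m] [DecidableEq m] (A : Matrix m m ℝ) (i0 : m) :
    (Pi.single i0 1 : m → ℝ) ⬝ᵥ (A *ᵥ (Pi.single i0 1 : m → ℝ)) = A i0 i0 := by
  simp [Matrix.mulVec_single, single_dotProduct]

lemma single_norm_two {m : Type} [Fintype m] [DecidableEq m] (i0 i1 : m) (h : i0 ≠ i1) (ε : ℝ) :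
    ((Pi.single i0 1 : m → ℝ) + ε • (Pi.single i1 1 : m → ℝ)) ⬝ᵥ
      ((Pi.single i0 1 : m → ℝ) + ε • (Pi.single i1 1 : m → ℝ)) = 1 + ε^2 := by
  simp [dotProduct_add, dotProduct_smul, add_dotProduct, smul_dotProduct,
    single_dotProduct, dotProduct_single, Pi.single_apply, h, h.symm]
  ring

lemma single_norm_one {m : Type} [Fintype m] [DecidableEq m] (i0 : m) :
    (Pi.single i0 1 : m → ℝ) ⬝ᵥ (Pi.single i0 1 : m → ℝ) = 1 := by
  simp [single_dotProduct, Pi.single_apply]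

lemma sum_ind_le (n m : ℕ) : (∑ u : Fin n, if (u : ℕ) = m then (1:ℝ) else 0) ≤ 1 := by
  rcases lt_or_ge m n with h | h
  · calc (∑ u : Fin n, if (u : ℕ) = m then (1:ℝ) else 0)
        = ∑ u : Fin n, if u = (⟨m, h⟩ : Fin n) then (1:ℝ) else 0 :=
          Finset.sum_congr rfl (fun u _ => if_congr (by simp [Fin.ext_iff]) rfl rfl)
      _ = 1 := by rw [Finset.sum_ite_eq' Finset.univ (⟨m, h⟩ : Fin n) (fun _ => (1:ℝ))]; simp
      _ ≤ 1 := le_refl 1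
  · have hz : ∀ u : Fin n, ¬ ((u : ℕ) = m) := fun u => by have := u.2; omega
    simp [hz]

lemma sum_pathW_zero (n : ℕ) (h2 : 2 ≤ n) :
    ∑ u : Fin n, pathW n u ⟨0, by omega⟩ = 1 := by
  calc (∑ u : Fin n, pathW n u ⟨0, by omega⟩)
      = ∑ u : Fin n, if u = (⟨1, by omega⟩ : Fin n) then (1:ℝ) else 0 :=
        Finset.sum_congr rfl (fun u _ => by
          rw [pathW_apply]
          exact if_congr (by simp [Fin.ext_iff]; omega) rfl rfl)
    _ = 1 := by
        rw [Finset.sum_ite_eq' Finset.univ (⟨1, by omega⟩ : Fin n) (fun _ => (1:ℝ))]; simp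

lemma sum_pathW_one_le (n : ℕ) (h2 : 2 ≤ n) :
    ∑ u : Fin n, pathW n u ⟨1, by omega⟩ ≤ 2 := by
  have hle : ∀ u : Fin n, pathW n u ⟨1, by omega⟩ ≤
      (if (u : ℕ) = 0 then (1:ℝ) else 0) + (if (u : ℕ) = 2 then (1:ℝ) else 0) := by
    intro u
    rw [pathW_apply]
    set_option linter.unreachableTactic false in
    set_option linter.unusedTactic false in
    split_ifs with h1 h2' h3 h2'' h3' <;> simp_all <;> omega
  calc (∑ u : Fin n, pathW n u ⟨1, by omega⟩)
      ≤ ∑ u : Fin n, ((if (u : ℕ) = 0 then (1:ℝ) else 0) + (if (u : ℕ) = 2 then (1:ℝ) else 0)) :=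
        Finset.sum_le_sum (fun u _ => hle u)
    _ = (∑ u : Fin n, if (u : ℕ) = 0 then (1:ℝ) else 0)
        + (∑ u : Fin n, if (u : ℕ) = 2 then (1:ℝ) else 0) := Finset.sum_add_distrib
    _ ≤ 1 + 1 := add_le_add (sum_ind_le n 0) (sum_ind_le n 2)
    _ = 2 := by norm_num

end Helpers

section Main

lemma main_lemma (n : ℕ) (hn : 0 < n) (f : Fin n → ℕ)
    (hf : f ⟨0, hn⟩ = 0) :
    lamRe (lap (coneW (pathW n) (fun v => (f v : ℝ)))) 1 < 1 := by
  set g : Fin n → ℝ := fun v => (f v : ℝ) with hg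
  set M : Matrix (Option (Fin n)) (Option (Fin n)) ℝ := lap (coneW (pathW n) g) with hM
  set A : Matrix (Fin n) (Fin n) ℝ := Matrix.of (fun i j => M (some i) (some j)) with hA
  have hg0 : g ⟨0, hn⟩ = 0 := by simp [hg, hf]
  have hgnn : ∀ v, 0 ≤ g v := fun v => Nat.cast_nonneg _
  -- the cone-vertex row is zero
  have hrow : ∀ b, M none b = 0 := by
    intro b
    cases b with
    | none =>
      simp only [hM, lap, Matrix.of_apply, if_pos rfl]
      rw [Fintype.sum_option]
      simp
    | some v =>
      simp only [hM, lap, Matrix.of_apply]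
      rw [if_neg (by simp)]
      simp
  -- entries of A
  have hAdiag : ∀ i, A i i = g i + ∑ u : Fin n, pathW n u i := by
    intro i
    show (if (some i : Option (Fin n)) = some i then
        (∑ k : Option (Fin n), coneW (pathW n) g k (some i))
          - coneW (pathW n) g (some i) (some i)
      else -(coneW (pathW n) g (some i) (some i))) = _
    rw [if_pos rfl, Fintype.sum_option]
    simp only [coneW_none_some, coneW_some_some]
    rw [show pathW n i i = 0 from by rw [pathW_apply]; exact if_neg (by omega), sub_zero]
  have hAne : ∀ i j, i ≠ j → A i j = -(pathW n j i) := by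
    intro i j hij
    simp only [hA, Matrix.of_apply, hM, lap]
    rw [if_neg (by simpa using hij)]
    rfl
  -- A is symmetric
  have hHerm : A.IsHermitian := by
    rw [Matrix.IsHermitian]
    ext i j
    rw [Matrix.conjTranspose_apply, star_trivial]
    rcases eq_or_ne i j with rfl | hij
    · rfl
    · rw [hAne j i hij.symm, hAne i j hij]
      simp [pathW_apply, or_comm]
  -- a direction of strict decrease
  have hx : ∃ x : Fin n → ℝ, x ⬝ᵥ (A *ᵥ x) < x ⬝ᵥ x := by
    by_cases h2 : 2 ≤ n
    · set i0 : Fin n := ⟨0, hn⟩ with hi0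
      set i1 : Fin n := ⟨1, by omega⟩ with hi1
      have hne : i0 ≠ i1 := by simp [hi0, hi1, Fin.ext_iff]
      set c : ℝ := g i1 + 2 with hc
      have hcpos : (0:ℝ) < c := by have := hgnn i1; positivity
      set ε : ℝ := 1 / c with hε
      have hεpos : 0 < ε := by positivity
      have hcε : c * ε = 1 := by
        rw [hε]; field_simp
      refine ⟨(Pi.single i0 1 : Fin n → ℝ) + ε • (Pi.single i1 1 : Fin n → ℝ), ?_⟩
      rw [quad_two, single_norm_two _ _ hne]
      have e00 : A i0 i0 = 1 := by
        rw [hAdiag, hg0, sum_pathW_zero n h2, zero_add]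
      have e01 : A i0 i1 = -1 := by
        rw [hAne _ _ hne, pathW_apply, if_pos (by simp [hi0, hi1])]
      have e10 : A i1 i0 = -1 := by
        rw [hAne _ _ hne.symm, pathW_apply, if_pos (by simp [hi0, hi1])]
      have e11 : A i1 i1 ≤ c := by
        rw [hAdiag, hc]
        exact (add_le_add_iff_left _).2 (sum_pathW_one_le n h2)
      rw [e00, e01, e10]
      have key : ε ^ 2 * A i1 i1 ≤ ε := by
        calc ε ^ 2 * A i1 i1 ≤ ε ^ 2 * c := by
              apply mul_le_mul_of_nonneg_left e11 (by positivity)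
          _ = ε * (c * ε) := by ring
          _ = ε := by rw [hcε, mul_one]
      nlinarith
    · obtain rfl : n = 1 := by omega
      refine ⟨(Pi.single ⟨0, hn⟩ 1 : Fin 1 → ℝ), ?_⟩
      rw [quad_one, single_norm_one, hAdiag, hg0, zero_add]
      have : ∑ u : Fin 1, pathW 1 u ⟨0, hn⟩ = 0 := by
        rw [Fin.sum_univ_one, pathW_apply, if_neg (by omega)]
      rw [this]
      norm_num
  obtain ⟨x, hxlt⟩ := hx
  obtain ⟨i, hi⟩ := exists_eig_lt hHerm x hxlt
  have hroot : A.charpoly.IsRoot (hHerm.eigenvalues i) := eig_isRoot hHerm i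
  have hchar : M.charpoly = A.charpoly * X := charpoly_option M hrow
  set q : ℂ[X] := A.charpoly.map (algebraMap ℝ ℂ) with hq
  have hq0 : q ≠ 0 := (A.charpoly_monic.map _).ne_zero
  have hmapeq : M.map (fun x : ℝ => (x : ℂ)) = M.map (algebraMap ℝ ℂ) := rfl
  have hr : (M.map (fun x : ℝ => (x : ℂ))).charpoly.roots = q.roots + {0} := by
    rw [hmapeq, Matrix.charpoly_map, hchar, Polynomial.map_mul, Polynomial.map_X,
      Polynomial.roots_mul (mul_ne_zero hq0 Polynomial.X_ne_zero), Polynomial.roots_X]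
  have hμmem : (algebraMap ℝ ℂ (hHerm.eigenvalues i)) ∈ q.roots := by
    rw [hq, Polynomial.mem_roots hq0]
    exact hroot.map
  apply lamRe_lt_one
  rw [hr, Multiset.map_add, Multiset.countP_add]
  have hA1 : 0 < Multiset.countP (fun x => x < 1) (q.roots.map Complex.re) :=
    Multiset.countP_pos.2 ⟨_, Multiset.mem_map_of_mem _ hμmem, by simpa using hi⟩
  have hB1 : Multiset.countP (fun x => x < 1) (({0} : Multiset ℂ).map Complex.re) = 1 := by
    rw [Multiset.map_singleton, show ({Complex.re 0} : Multiset ℝ) = Complex.re 0 ::ₘ 0 from rfl,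
      Multiset.countP_cons]
    norm_num
  omega

lemma lap_comp_equiv {V W : Type} [Fintype V] [DecidableEq V] [Fintype W] [DecidableEq W]
    (w : V → V → ℝ) (e : W ≃ V) :
    lap (fun a b => w (e a) (e b)) = (lap w).submatrix e e := by
  ext i j
  simp only [lap, Matrix.of_apply, Matrix.submatrix_apply]
  rcases eq_or_ne i j with rfl | hij
  · rw [if_pos rfl, if_pos rfl, Equiv.sum_comp e (fun k => w k (e i))]
  · rw [if_neg hij, if_neg (fun h => hij (e.injective h))]

end Main

/-- If f(v₁) = 0 or f(vₙ) = 0 then λ₂ of the Laplacian of the cone of the path graph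
with cone weights f is strictly below 1. -/
theorem stmt_5 (n : ℕ) (hn : 0 < n) (f : Fin n → ℕ)
    (hf : f ⟨0, hn⟩ = 0 ∨ f ⟨n - 1, by omega⟩ = 0) :
    lamRe (lap (coneW (pathW n) (fun v => (f v : ℝ)))) 1 < 1 := by
  rcases hf with hf | hf
  · exact main_lemma n hn f hf
  · set e : Option (Fin n) ≃ Option (Fin n) := Equiv.optionCongr (Fin.revPerm) with he
    have hkey : lap (coneW (pathW n) (fun v => ((f (Fin.rev v) : ℕ) : ℝ))) =
        (lap (coneW (pathW n) (fun v => (f v : ℝ)))).submatrix e e := by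
      rw [← lap_comp_equiv (coneW (pathW n) (fun v => (f v : ℝ))) e]
      have hw : (coneW (pathW n) (fun v => ((f (Fin.rev v) : ℕ) : ℝ))) =
          (fun a b => coneW (pathW n) (fun v => ((f v : ℕ) : ℝ)) (e a) (e b)) := by
        funext a b
        match a, b with
        | none, none => simp [he]
        | none, some v => simp [he]
        | some u, none => simp [he]
        | some u, some v =>
          simp only [he, Equiv.optionCongr_apply, Option.map_some, coneW_some_some,
            Fin.revPerm_apply]
          rw [pathW_apply, pathW_apply]
          refine if_congr ?_ rfl rfl
          have hu := u.2
          have hv := v.2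
          simp only [Fin.val_rev]
          omega
      rw [hw]
    have := main_lemma n hn (fun v => f (Fin.rev v)) (by
      have : Fin.rev (⟨0, hn⟩ : Fin n) = ⟨n - 1, by omega⟩ := by
        rw [Fin.ext_iff, Fin.val_rev]
      simpa [this] using hf)
    rw [hkey, lamRe_submatrix] at this
    exact this
end

section
/- Let G be a weighted digraph and v_i ∈ V(G). Then det(L_{G^w}[i]) equals the sum over all spanning directed trees T of G rooted at v_i of the product of the weights of the edges of T. -/
/-- `T` is a spanning directed tree (arborescence) of the complete weighted digraph on
`V` rooted at `r`: every node other than `r` has exactly one in-edge in `T`, `r` has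
none, and every node is reachable from `r` along edges of `T`. -/
def IsSpanningTreeRootedAt {V : Type*} (r : V) (T : Finset (V × V)) : Prop :=
  (∀ v, v ≠ r → ∃! u, (u, v) ∈ T) ∧ (∀ u, (u, r) ∉ T) ∧
    ∀ v, Relation.ReflTransGen (fun a b => (a, b) ∈ T) r v

set_option linter.unusedSectionVars false

open Polynomial Matrix Finset

namespace TutteAux

lemma det_one_sub_of_isNilpotent {n : Type*} [Fintype n] [DecidableEq n]
    {N : Matrix n n ℝ} (h : IsNilpotent N) : (1 - N).det = 1 := by
  have hu : IsUnit N.charpolyRev := Matrix.isUnit_charpolyRev_of_isNilpotent h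
  have hc := Polynomial.isUnit_iff_coeff_isUnit_isNilpotent.mp hu
  have hC : N.charpolyRev = C (N.charpolyRev.coeff 0) := by
    ext k
    rcases Nat.eq_zero_or_pos k with hk | hk
    · simp [hk]
    · have := (hc.2 k hk.ne').eq_zero
      simp [this, Polynomial.coeff_C, hk.ne']
  have h0 : N.charpolyRev.coeff 0 = 1 := by
    have := Matrix.eval_charpolyRev (M := N)
    rwa [Polynomial.coeff_zero_eq_eval_zero]
  have heval : N.charpolyRev.eval 1 = 1 := by rw [hC, h0]; simp
  have : N.charpolyRev.eval 1 = (1 - N).det := by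
    rw [Matrix.charpolyRev, ← Polynomial.coe_evalRingHom, RingHom.map_det]
    congr 1
    ext i j
    rcases eq_or_ne i j with rfl | hij
    · simp [Matrix.one_apply]
    · simp [Matrix.one_apply, hij]
  rw [← this, heval]

variable {V : Type*} [Fintype V] [DecidableEq V]

variable {V : Type*} [Fintype V] [DecidableEq V]

def ext (r : V) (p : {v : V // v ≠ r} → V) : V → V :=
  fun x => if h : x = r then r else p ⟨x, h⟩

def Acyc (r : V) (p : {v : V // v ≠ r} → V) : Prop :=
  ∀ x : V, ∃ k, (ext r p)^[k] x = r

lemma ext_r (r : V) (p : {v : V // v ≠ r} → V) : ext r p r = r := by simp [ext]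

lemma ext_ne (r : V) (p : {v : V // v ≠ r} → V) (v : {v : V // v ≠ r}) :
    ext r p v.1 = p v := by simp [ext, v.2]

noncomputable def Nmat (r : V) (p : {v : V // v ≠ r} → V) :
    Matrix {v : V // v ≠ r} {v : V // v ≠ r} ℝ :=
  Matrix.of fun v u => if (u : V) = p v then 1 else 0

noncomputable def Rmat (r : V) (p : {v : V // v ≠ r} → V) :
    Matrix {v : V // v ≠ r} {v : V // v ≠ r} ℝ :=
  Matrix.of fun v u => (if u = v then 1 else 0) - (if (u : V) = p v then 1 else 0)

lemma Rmat_eq (r : V) (p : {v : V // v ≠ r} → V) : Rmat r p = 1 - Nmat r p := by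
  ext v u
  simp [Rmat, Nmat, Matrix.one_apply, eq_comm]

lemma pow_Nmat_ne_zero (r : V) (p : {v : V // v ≠ r} → V) (k : ℕ) :
    ∀ v u : {v : V // v ≠ r}, (Nmat r p ^ k) v u ≠ 0 → (ext r p)^[k] v.1 = u.1 := by
  induction k with
  | zero =>
    intro v u h
    rw [pow_zero] at h
    simp only [Matrix.one_apply, ne_eq, ite_eq_right_iff, Classical.not_imp] at h
    simp [h.1]
  | succ k ih =>
    intro v u h
    rw [pow_succ', Matrix.mul_apply] at h
    obtain ⟨m, hm⟩ := Finset.exists_ne_zero_of_sum_ne_zero h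
    have h1 : (m : V) = p v := by
      by_contra hc
      simp [Nmat, hc] at hm
    have h2 : (Nmat r p ^ k) m u ≠ 0 := by
      intro hc; simp [hc] at hm
    have := ih m u h2
    rw [Function.iterate_succ_apply, ext_ne r p v, ← h1, this]

lemma isNilpotent_Nmat {r : V} {p : {v : V // v ≠ r} → V} (h : Acyc r p) :
    IsNilpotent (Nmat r p) := by
  classical
  set K := Finset.univ.sup (fun x : V => Nat.find (h x)) with hK
  have hiter : ∀ x : V, (ext r p)^[K] x = r := by
    intro x
    have hk : Nat.find (h x) ≤ K := Finset.le_sup (f := fun x : V => Nat.find (h x)) (Finset.mem_univ x)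
    have : (ext r p)^[Nat.find (h x)] x = r := Nat.find_spec (h x)
    calc (ext r p)^[K] x = (ext r p)^[K - Nat.find (h x) + Nat.find (h x)] x := by
          rw [Nat.sub_add_cancel hk]
      _ = (ext r p)^[K - Nat.find (h x)] ((ext r p)^[Nat.find (h x)] x) := by
          rw [Function.iterate_add_apply]
      _ = r := by rw [this]; exact Function.iterate_fixed (ext_r r p) _
  refine ⟨K, ?_⟩
  ext v u
  by_contra hc
  have := pow_Nmat_ne_zero r p K v u (by simpa using hc)
  rw [hiter v.1] at this
  exact u.2 this.symm


noncomputable def treeOf (r : V) (p : {v : V // v ≠ r} → V) : Finset (V × V) :=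
  Finset.image (fun v : {v : V // v ≠ r} => (p v, v.1)) Finset.univ

lemma mem_treeOf (r : V) (p : {v : V // v ≠ r} → V) (a b : V) :
    (a, b) ∈ treeOf r p ↔ ∃ hb : b ≠ r, a = p ⟨b, hb⟩ := by
  constructor
  · intro h
    obtain ⟨v, -, hv⟩ := Finset.mem_image.mp h
    have h2 : v.1 = b := congrArg Prod.snd hv
    have h1 : p v = a := congrArg Prod.fst hv
    refine ⟨h2 ▸ v.2, ?_⟩
    rw [← h1]
    congr 1
    exact Subtype.ext h2
  · rintro ⟨hb, rfl⟩
    exact Finset.mem_image.mpr ⟨⟨b, hb⟩, Finset.mem_univ _, rfl⟩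

lemma spanning_treeOf {r : V} {p : {v : V // v ≠ r} → V} (hp : Acyc r p) :
    IsSpanningTreeRootedAt r (treeOf r p) := by
  refine ⟨?_, ?_, ?_⟩
  · intro v hv
    refine ⟨p ⟨v, hv⟩, (mem_treeOf r p _ _).mpr ⟨hv, rfl⟩, ?_⟩
    intro u hu
    obtain ⟨hb, rfl⟩ := (mem_treeOf r p _ _).mp hu
    rfl
  · intro u hu
    obtain ⟨hb, _⟩ := (mem_treeOf r p _ _).mp hu
    exact hb rfl
  · intro v
    obtain ⟨k, hk⟩ := hp v
    clear hp
    induction k generalizing v with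
    | zero => rw [Function.iterate_zero_apply] at hk; rw [hk]
    | succ k ih =>
      rcases eq_or_ne v r with rfl | hv
      · rfl
      · rw [Function.iterate_succ_apply, ext_ne r p ⟨v, hv⟩] at hk
        exact (ih _ hk).tail ((mem_treeOf r p _ _).mpr ⟨hv, rfl⟩)

lemma treeOf_inj {r : V} {p q : {v : V // v ≠ r} → V}
    (h : treeOf r p = treeOf r q) : p = q := by
  funext v
  have : (p v, v.1) ∈ treeOf r q := h ▸ (mem_treeOf r p _ _).mpr ⟨v.2, rfl⟩
  obtain ⟨hb, h2⟩ := (mem_treeOf r q _ _).mp this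
  rw [h2]

lemma acyc_of_spanning {r : V} {T : Finset (V × V)} (hT : IsSpanningTreeRootedAt r T)
    (p : {v : V // v ≠ r} → V) (hp : ∀ v, (p v, v.1) ∈ T) : Acyc r p := by
  obtain ⟨h1, h2, h3⟩ := hT
  intro x
  have := h3 x
  induction this with
  | refl => exact ⟨0, rfl⟩
  | @tail b c hrb hbc ih =>
    obtain ⟨k, hk⟩ := ih
    have hc : c ≠ r := fun h => h2 b (h ▸ hbc)
    have hbp : b = p ⟨c, hc⟩ := (h1 c hc).unique hbc (hp ⟨c, hc⟩)
    refine ⟨k + 1, ?_⟩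
    rw [Function.iterate_succ_apply, ext_ne r p ⟨c, hc⟩, ← hbp, hk]

open Classical in
lemma sum_trees (w : V → V → ℝ) (r : V) :
    ∑ p ∈ (Fintype.piFinset (fun v : {v : V // v ≠ r} =>
        Finset.univ.filter (fun k => k ≠ v.1))).filter (Acyc r),
        ∏ v, w (p v) v.1
      = ∑ T ∈ Finset.univ.filter (IsSpanningTreeRootedAt r),
          ∏ e ∈ T, w e.1 e.2 := by
  classical
  refine Finset.sum_bij (fun p _ => treeOf r p) ?_ ?_ ?_ ?_
  · intro p hp
    rw [Finset.mem_filter] at hp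
    exact Finset.mem_filter.mpr ⟨Finset.mem_univ _, spanning_treeOf hp.2⟩
  · intro p hp q hq h
    exact treeOf_inj h
  · intro T hT
    rw [Finset.mem_filter] at hT
    obtain ⟨-, hT⟩ := hT
    obtain ⟨h1, h2, h3⟩ := hT
    set p : {v : V // v ≠ r} → V := fun v => (h1 v.1 v.2).exists.choose with hpdef
    have hp : ∀ v : {v : V // v ≠ r}, (p v, v.1) ∈ T :=
      fun v => (h1 v.1 v.2).exists.choose_spec
    have hac : Acyc r p := acyc_of_spanning ⟨h1, h2, h3⟩ p hp
    have hmem : p ∈ Fintype.piFinset (fun v : {v : V // v ≠ r} =>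
        Finset.univ.filter (fun k => k ≠ v.1)) := by
      rw [Fintype.mem_piFinset]
      intro v
      rw [Finset.mem_filter]
      refine ⟨Finset.mem_univ _, fun hcontra => ?_⟩
      obtain ⟨k, hk⟩ := hac v.1
      have hfix : ext r p v.1 = v.1 := by rw [ext_ne r p v, hcontra]
      rw [Function.iterate_fixed hfix] at hk
      exact v.2 hk
    refine ⟨p, Finset.mem_filter.mpr ⟨hmem, hac⟩, ?_⟩
    apply Finset.Subset.antisymm
    · intro e he
      obtain ⟨v, -, rfl⟩ := Finset.mem_image.mp he
      exact hp v
    · intro e he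
      obtain ⟨a, b⟩ := e
      have hb : b ≠ r := fun h => h2 a (h ▸ he)
      have : a = p ⟨b, hb⟩ := (h1 b hb).unique he (hp ⟨b, hb⟩)
      exact (mem_treeOf r p a b).mpr ⟨hb, this⟩
  · intro p hp
    have hinj : ∀ v ∈ (Finset.univ : Finset {v : V // v ≠ r}), ∀ v' ∈ Finset.univ,
        (fun v : {v : V // v ≠ r} => (p v, v.1)) v
          = (fun v : {v : V // v ≠ r} => (p v, v.1)) v' → v = v' :=
      fun v _ v' _ h => Subtype.ext (congrArg Prod.snd h)
    exact (Finset.prod_image (f := fun e : V × V => w e.1 e.2)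
      (g := fun v : {v : V // v ≠ r} => (p v, v.1)) (s := Finset.univ) hinj).symm


lemma det_Rmat_cyc {r : V} {p : {v : V // v ≠ r} → V} (h : ¬ Acyc r p) :
    (Rmat r p).det = 0 := by
  classical
  simp only [Acyc, not_forall, not_exists] at h
  obtain ⟨x, hx⟩ := h
  set f : ℕ → {v : V // v ≠ r} := fun k => ⟨(ext r p)^[k] x, hx k⟩ with hf
  obtain ⟨a, b, hab, hfab⟩ := Finite.exists_ne_map_eq_of_infinite f
  obtain ⟨i, j, hij, hfij⟩ : ∃ i j, i < j ∧ f i = f j := by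
    rcases hab.lt_or_gt with hlt | hlt
    · exact ⟨a, b, hlt, hfab⟩
    · exact ⟨b, a, hlt, hfab.symm⟩
  set c : {v : V // v ≠ r} → ℝ := fun u => ∑ k ∈ Finset.Ico i j, if f k = u then 1 else 0
    with hc
  have hc0 : c ≠ 0 := by
    intro h0
    have h1 : c (f i) = 0 := by rw [h0]; rfl
    have h2 : (0:ℝ) < c (f i) := by
      refine Finset.sum_pos' (fun k _ => by positivity) ⟨i, ?_, by simp⟩
      simp [hij]
    rw [h1] at h2; exact lt_irrefl 0 h2
  have hstep : ∀ k, p (f k) = (f (k+1) : V) := by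
    intro k
    rw [← ext_ne r p (f k)]
    simp only [hf, Function.iterate_succ_apply']
  have hvm : Matrix.vecMul c (Rmat r p) = 0 := by
    funext u
    have key : ∀ v, c v * (Rmat r p) v u
        = ∑ k ∈ Finset.Ico i j, (if f k = v then 1 else 0) * (Rmat r p) v u := by
      intro v; rw [hc, Finset.sum_mul]
    simp only [Matrix.vecMul, dotProduct, key, Pi.zero_apply]
    rw [Finset.sum_comm]
    have collapse : ∀ k ∈ Finset.Ico i j,
        (∑ v, (if f k = v then (1:ℝ) else 0) * (Rmat r p) v u)
          = (if u = f k then 1 else 0) - (if u = f (k+1) then 1 else 0) := by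
      intro k _
      rw [Finset.sum_eq_single (f k)]
      · have : ((u : V) = p (f k)) ↔ (u = f (k+1)) := by
          rw [hstep k, Subtype.coe_inj]
        simp only [Rmat, Matrix.of_apply, if_pos rfl, one_mul]
        simp only [this]
        simp
      · intro v _ hv; simp [Ne.symm hv]
      · intro hn; exact absurd (Finset.mem_univ _) hn
    rw [Finset.sum_congr rfl collapse]
    have := Finset.sum_Ico_eq_sum_range
      (f := fun k => (if u = f k then (1:ℝ) else 0) - (if u = f (k+1) then 1 else 0))
      (m := i) (n := j)
    rw [this]
    have tel := Finset.sum_range_sub' (f := fun k => if u = f (i + k) then (1:ℝ) else 0)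
      (n := j - i)
    have : ∀ k, i + k + 1 = i + (k + 1) := fun k => by omega
    simp only [this] at tel ⊢
    rw [tel, Nat.add_sub_cancel' hij.le]
    simp only [Nat.add_zero, hfij, sub_self]
  exact (Matrix.exists_vecMul_eq_zero_iff).mp ⟨c, hc0, hvm⟩


lemma expand (w : V → V → ℝ) (r : V) :
    ((lap w).submatrix (fun v : {v // v ≠ r} => v.1) (fun v : {v // v ≠ r} => v.1)).det
      = ∑ p ∈ Fintype.piFinset
          (fun v : {v : V // v ≠ r} => Finset.univ.filter (fun k => k ≠ v.1)),
          (∏ v, w (p v) v.1) * (Rmat r p).det := by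
  classical
  have hM : (lap w).submatrix (fun v : {v // v ≠ r} => v.1) (fun v : {v // v ≠ r} => v.1)
      = Matrix.of (fun v : {v // v ≠ r} =>
          ∑ k ∈ Finset.univ.filter (fun k => k ≠ v.1),
            (fun u : {v // v ≠ r} =>
              w k v.1 * ((if u = v then 1 else 0) - (if (u : V) = k then 1 else 0)))) := by
    ext v u
    simp only [Matrix.submatrix_apply, Matrix.of_apply, lap, Finset.sum_apply]
    rw [Finset.filter_ne' Finset.univ v.1]
    rcases eq_or_ne u v with rfl | huv
    · rw [if_pos rfl, eq_comm]
      have hcong : ∀ k ∈ Finset.univ.erase (u : V),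
          w k u.1 * ((if u = u then (1:ℝ) else 0) - (if (u : V) = k then 1 else 0))
            = w k u.1 := by
        intro k hk
        have hk' : k ≠ (u : V) := Finset.ne_of_mem_erase hk
        simp [Ne.symm hk']
      rw [Finset.sum_congr rfl hcong, Finset.sum_erase_eq_sub (Finset.mem_univ (u : V))]
    · have huv' : v.1 ≠ u.1 := fun h => huv (Subtype.ext h.symm)
      rw [if_neg huv']
      rw [Finset.sum_eq_single u.1]
      · simp [huv]
      · intro k hk hku
        simp [huv, Ne.symm hku]
      · intro hn
        exact absurd (Finset.mem_erase.mpr ⟨fun h => huv' h.symm, Finset.mem_univ _⟩) hn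
  rw [hM]
  have e1 : (Matrix.of (fun v : {v // v ≠ r} =>
          ∑ k ∈ Finset.univ.filter (fun k => k ≠ v.1),
            (fun u : {v // v ≠ r} =>
              w k v.1 * ((if u = v then 1 else 0) - (if (u : V) = k then 1 else 0))))).det
      = ((Matrix.detRowAlternating :
          ({v : V // v ≠ r} → ℝ) [⋀^{v : V // v ≠ r}]→ₗ[ℝ] ℝ).toMultilinearMap)
          (fun v : {v : V // v ≠ r} =>
            ∑ k ∈ Finset.univ.filter (fun k => k ≠ v.1),
              (fun u : {v // v ≠ r} =>
                w k v.1 * ((if u = v then 1 else 0) - (if (u : V) = k then 1 else 0)))) := rfl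
  have e2 := MultilinearMap.map_sum_finset
    (f := (Matrix.detRowAlternating :
      ({v : V // v ≠ r} → ℝ) [⋀^{v : V // v ≠ r}]→ₗ[ℝ] ℝ).toMultilinearMap)
    (g := fun (v : {v : V // v ≠ r}) (k : V) =>
      (fun u : {v // v ≠ r} =>
        w k v.1 * ((if u = v then 1 else 0) - (if (u : V) = k then 1 else 0))))
    (A := fun v : {v : V // v ≠ r} => Finset.univ.filter (fun k => k ≠ v.1))
  rw [e1, e2]
  refine Finset.sum_congr rfl (fun p _ => ?_)
  have e3 : ((Matrix.detRowAlternating :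
      ({v : V // v ≠ r} → ℝ) [⋀^{v : V // v ≠ r}]→ₗ[ℝ] ℝ).toMultilinearMap)
      (fun v : {v : V // v ≠ r} => (fun u : {v // v ≠ r} =>
        w (p v) v.1 * ((if u = v then 1 else 0) - (if (u : V) = p v then 1 else 0))))
      = (Matrix.of fun v u : {v // v ≠ r} =>
          (fun v' : {v : V // v ≠ r} => w (p v') v'.1) v * (Rmat r p) v u).det := rfl
  rw [e3, Matrix.det_mul_column]


lemma det_Rmat_acyc {V : Type*} [Fintype V] [DecidableEq V]
    {r : V} {p : {v : V // v ≠ r} → V} (h : Acyc r p) : (Rmat r p).det = 1 := by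
  rw [Rmat_eq]
  exact det_one_sub_of_isNilpotent (isNilpotent_Nmat h)

end TutteAux

open TutteAux in
open Classical in
/-- Tutte's matrix-tree theorem: for any node `r`, the principal minor of the weighted
Laplacian obtained by deleting the row and column of `r` equals the sum, over all
spanning directed trees `T` rooted at `r`, of the products of the weights of the
edges of `T`. -/
theorem stmt_10 {V : Type*} [Fintype V] [DecidableEq V] (w : V → V → ℝ) (r : V) :
    ((lap w).submatrix (fun v : {v // v ≠ r} => v.1) (fun v : {v // v ≠ r} => v.1)).det
      = ∑ T ∈ Finset.univ.filter (IsSpanningTreeRootedAt r),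
          ∏ e ∈ T, w e.1 e.2 := by
  classical
  rw [TutteAux.expand w r]
  have hsplit : ∀ p ∈ Fintype.piFinset
      (fun v : {v : V // v ≠ r} => Finset.univ.filter (fun k => k ≠ v.1)),
      (∏ v, w (p v) v.1) * (Rmat r p).det
        = if Acyc r p then ∏ v, w (p v) v.1 else 0 := by
    intro p _
    by_cases h : Acyc r p
    · rw [det_Rmat_acyc h, mul_one, if_pos h]
    · rw [det_Rmat_cyc h, mul_zero, if_neg h]
  rw [Finset.sum_congr rfl hsplit, ← Finset.sum_filter]
  exact sum_trees w r
end

section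
/- Let G be a layered path graph (layers G₁, ..., G_m with V(G₁) a singleton and each G_i a disjoint union of undirected path graphs; all inter-layer edges go from layer i to layer i+1). Then 0 ≤ λ₂(L_G) ≤ 1, where λ₂ denotes the second smallest eigenvalue (in real part) of the Laplacian of G. -/
/-- Weight 1 on each edge of the digraph with edge relation `E`. -/
noncomputable def edgeW {V : Type*} (E : V → V → Prop) : V → V → ℝ :=
  fun u v => @ite ℝ (E u v) (Classical.propDecidable _) 1 0

/-- The set of in-neighbors of `v` lying in the preceding layer. -/
def Ndown {V : Type*} {m : ℕ} (layer : V → Fin m) (E : V → V → Prop) (v : V) : Set V :=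
  {u | E u v ∧ (layer u).1 + 1 = (layer v).1}

/-- The from-above degree `d↓(v)`. -/
noncomputable def ddown {V : Type*} {m : ℕ} (layer : V → Fin m) (E : V → V → Prop)
    (v : V) : ℕ :=
  (Ndown layer E v).ncard

/-- The undirected graph formed by the intra-layer edges. -/
def intraG {V : Type*} {m : ℕ} (layer : V → Fin m) (E : V → V → Prop) :
    SimpleGraph V where
  Adj u v := u ≠ v ∧ layer u = layer v ∧ E u v ∧ E v u
  symm := ⟨by rintro u v ⟨h1, h2, h3, h4⟩; exact ⟨h1.symm, h2.symm, h4, h3⟩⟩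
  loopless := ⟨by rintro v ⟨h1, -⟩; exact h1 rfl⟩

/-- An undirected graph is a disjoint union of (possibly trivial) path graphs iff it
is acyclic and every vertex has at most two neighbors. -/
def IsPathsUnion {V : Type*} (G : SimpleGraph V) : Prop :=
  G.IsAcyclic ∧ ∀ v, (G.neighborSet v).ncard ≤ 2

section aux

open Matrix in
lemma eval_charpoly' {n R : Type*} [CommRing R] [Fintype n] [DecidableEq n]
    (M : Matrix n n R) (r : R) :
    M.charpoly.eval r = (Matrix.diagonal (fun _ => r) - M).det := by
  rw [Matrix.charpoly, ← Polynomial.coe_evalRingHom, RingHom.map_det]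
  congr 1
  ext i j
  by_cases h : i = j
  · subst h; simp [Matrix.charmatrix_apply_eq, Matrix.diagonal_apply]
  · simp [Matrix.charmatrix_apply_ne _ _ _ h, Matrix.diagonal_apply, h]

open Matrix in
lemma exists_root_le_one' {n : Type*} [Fintype n] [DecidableEq n] [Nonempty n]
    (B : Matrix n n ℝ) (hsym : B.IsHermitian)
    (hsum : ∑ i, ∑ j, B i j ≤ (Fintype.card n : ℝ)) :
    ∃ μ : ℝ, μ ≤ 1 ∧ B.charpoly.IsRoot μ := by
  obtain ⟨i₀, -, hmin⟩ := Finset.exists_min_image Finset.univ hsym.eigenvalues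
    Finset.univ_nonempty
  set μ := hsym.eigenvalues i₀ with hμ
  have halg : (algebraMap ℝ (Matrix n n ℝ)) μ = Matrix.diagonal (fun _ => μ) := by
    rw [Matrix.algebraMap_eq_diagonal]; rfl
  have hroot : B.charpoly.IsRoot μ := by
    have hspec : μ ∈ spectrum ℝ B := hsym.eigenvalues_mem_spectrum_real i₀
    rw [spectrum.mem_iff] at hspec
    have hdet : (Matrix.diagonal (fun _ => μ) - B).det = 0 := by
      by_contra hne
      exact hspec (by rw [halg]
                      exact (Matrix.isUnit_iff_isUnit_det _).mpr (isUnit_iff_ne_zero.mpr hne))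
    rw [Polynomial.IsRoot.def, eval_charpoly']
    exact hdet
  refine ⟨μ, ?_, hroot⟩
  set U : Matrix n n ℝ := (hsym.eigenvectorUnitary : Matrix n n ℝ) with hU
  have hstar : star U = Uᵀ := by
    ext i j; simp [Matrix.star_apply]
  have hUU : U * Uᵀ = 1 := by
    rw [← hstar]; exact Matrix.mem_unitaryGroup_iff.mp (hsym.eigenvectorUnitary).2
  set y : n → ℝ := Uᵀ *ᵥ 1 with hy
  have hDs : Matrix.diagonal ((RCLike.ofReal ∘ hsym.eigenvalues) : n → ℝ)
      = Matrix.diagonal hsym.eigenvalues := by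
    congr 1
  have hspec : B = U * Matrix.diagonal hsym.eigenvalues * Uᵀ := by
    rw [← hDs, ← hstar]; exact hsym.spectral_theorem
  have key1 : (1 : n → ℝ) ⬝ᵥ (B *ᵥ 1) = ∑ i, hsym.eigenvalues i * (y i)^2 := by
    conv_lhs => rw [hspec, mul_assoc, ← Matrix.mulVec_mulVec, Matrix.dotProduct_mulVec,
      ← Matrix.mulVec_transpose, ← Matrix.mulVec_mulVec, ← hy]
    simp only [dotProduct, Matrix.mulVec_diagonal]
    exact Finset.sum_congr rfl fun i _ => by ring
  have key2 : y ⬝ᵥ y = (Fintype.card n : ℝ) := by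
    calc y ⬝ᵥ y = (1 : n → ℝ) ⬝ᵥ (U *ᵥ y) := by
          rw [Matrix.dotProduct_mulVec (1 : n → ℝ) U y,
            ← Matrix.mulVec_transpose U (1 : n → ℝ), ← hy]
        _ = (1 : n → ℝ) ⬝ᵥ (1 : n → ℝ) := by
          rw [hy, Matrix.mulVec_mulVec, hUU, Matrix.one_mulVec]
        _ = (Fintype.card n : ℝ) := by
          simp only [dotProduct, Pi.one_apply, mul_one, Finset.sum_const,
            Finset.card_univ, nsmul_eq_mul]
  have hsum' : (1 : n → ℝ) ⬝ᵥ (B *ᵥ 1) = ∑ i, ∑ j, B i j := by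
    simp [dotProduct, Matrix.mulVec]
  have hlow : μ * (Fintype.card n : ℝ) ≤ (Fintype.card n : ℝ) := by
    calc μ * (Fintype.card n : ℝ) = μ * (y ⬝ᵥ y) := by rw [key2]
      _ = ∑ i, μ * (y i)^2 := by
          rw [dotProduct, Finset.mul_sum]
          exact Finset.sum_congr rfl fun i _ => by ring
      _ ≤ ∑ i, hsym.eigenvalues i * (y i)^2 := by
          apply Finset.sum_le_sum
          intro i _
          exact mul_le_mul_of_nonneg_right (hmin i (Finset.mem_univ i)) (sq_nonneg _)
      _ = (1 : n → ℝ) ⬝ᵥ (B *ᵥ 1) := key1.symm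
      _ = ∑ i, ∑ j, B i j := hsum'
      _ ≤ (Fintype.card n : ℝ) := hsum
  have hcard : (0:ℝ) < (Fintype.card n : ℝ) := by
    exact_mod_cast Fintype.card_pos
  nlinarith

open Matrix in
lemma re_nonneg_of_root' {n : Type*} [Fintype n] [DecidableEq n] (w : n → n → ℝ)
    (hw : ∀ i j, 0 ≤ w i j) (hdiag : ∀ i, w i i = 0) {z : ℂ}
    (hz : ((lap w).map (fun x : ℝ => (x : ℂ))).charpoly.IsRoot z) : 0 ≤ z.re := by
  set Lc : Matrix n n ℂ := (lap w).map (fun x : ℝ => (x : ℂ)) with hLc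
  have hdet : (Matrix.diagonal (fun _ => z) - Lc).det = 0 := by
    rw [← eval_charpoly']; exact hz
  obtain ⟨v, hv0, hv⟩ := (Matrix.exists_mulVec_eq_zero_iff).mpr hdet
  have heig : Lc *ᵥ v = z • v := by
    rw [Matrix.sub_mulVec] at hv
    have hd : Matrix.diagonal (fun _ : n => z) *ᵥ v = z • v := by
      funext i; rw [Matrix.mulVec_diagonal]; rfl
    rw [hd] at hv
    linear_combination (norm := module) -hv
  have hev : Module.End.HasEigenvalue (Matrix.toLin' Lc) z :=
    Module.End.hasEigenvalue_of_hasEigenvector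
      ⟨Module.End.mem_eigenspace_iff.mpr (by rw [Matrix.toLin'_apply]; exact heig), hv0⟩
  obtain ⟨k, hk⟩ := eigenvalue_mem_ball hev
  have hdd : Lc k k = ((∑ j, w j k : ℝ) : ℂ) := by
    simp [hLc, lap, hdiag]
  have hsum : ∑ j ∈ Finset.univ.erase k, ‖Lc k j‖ = ∑ j, w j k := by
    have h1 : ∀ j ∈ Finset.univ.erase k, ‖Lc k j‖ = w j k := by
      intro j hj
      have hjk : k ≠ j := (Finset.ne_of_mem_erase hj).symm
      simp only [hLc, Matrix.map_apply, lap, Matrix.of_apply, if_neg hjk]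
      rw [Complex.ofReal_neg, norm_neg, Complex.norm_real, Real.norm_eq_abs,
        abs_of_nonneg (hw j k)]
    rw [Finset.sum_congr rfl h1, Finset.sum_erase_eq_sub (Finset.mem_univ k), hdiag k, sub_zero]
  rw [hdd, hsum] at hk
  rw [Metric.mem_closedBall, Complex.dist_eq] at hk
  have h1 : |z.re - (∑ j, w j k)| ≤ ‖z - ((∑ j, w j k : ℝ) : ℂ)‖ := by
    have := Complex.abs_re_le_norm (z - ((∑ j, w j k : ℝ) : ℂ))
    simpa using this
  have h2 : |z.re - (∑ j, w j k)| ≤ ∑ j, w j k := le_trans h1 hk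
  have := abs_le.mp h2
  linarith [this.1]

lemma sorted_getD_le' {l : List ℝ} (hs : l.Pairwise (· ≤ ·))
    (hc : 2 ≤ l.countP (fun t => decide (t ≤ 1))) : l.getD 1 0 ≤ 1 := by
  match l, hs, hc with
  | [], _, hc => simp at hc
  | [a], _, hc =>
    rw [List.countP_cons, List.countP_nil] at hc
    split at hc <;> omega
  | a :: b :: t, hs, hc =>
    show b ≤ 1
    by_contra hb
    push_neg at hb
    have ht : t.countP (fun t => decide (t ≤ 1)) = 0 := by
      rw [List.countP_eq_zero]
      intro z hz
      have hbz : b ≤ z := (List.rel_of_pairwise_cons hs.of_cons) hz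
      simp only [decide_eq_true_eq]
      push_neg
      linarith
    have ha : a ≤ b := List.rel_of_pairwise_cons hs (a' := b) (by simp)
    rw [List.countP_cons, List.countP_cons, ht] at hc
    have : ¬ (b ≤ 1) := by linarith
    simp [this] at hc
    split at hc <;> omega

lemma getD_one_nonneg' {R : Multiset ℝ} (h : ∀ x ∈ R, 0 ≤ x) :
    0 ≤ (R.sort (· ≤ ·)).getD 1 0 := by
  by_cases hl : 1 < (R.sort (· ≤ ·)).length
  · rw [List.getD_eq_getElem _ _ hl]
    exact h _ ((Multiset.mem_sort _).mp (List.getElem_mem hl))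
  · rw [List.getD_eq_default _ _ (not_lt.mp hl)]

lemma getD_one_le' {R : Multiset ℝ} {x y : ℝ} (hxy : {x, y} ≤ R)
    (hx1 : x ≤ 1) (hy1 : y ≤ 1) :
    (R.sort (· ≤ ·)).getD 1 0 ≤ 1 := by
  have hcount : 2 ≤ R.countP (fun t => t ≤ 1) := by
    have h2 : ({x, y} : Multiset ℝ).countP (fun t => t ≤ 1) = 2 := by
      rw [Multiset.insert_eq_cons, ← Multiset.cons_zero y, Multiset.countP_cons,
        Multiset.countP_cons, Multiset.countP_zero]
      simp [hx1, hy1]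
    rw [← h2]
    exact Multiset.countP_le_of_le _ hxy
  set l := R.sort (· ≤ ·) with hl
  have hsorted : l.Pairwise (· ≤ ·) := Multiset.pairwise_sort _ _
  have hcount' : 2 ≤ l.countP (fun t => decide (t ≤ 1)) := by
    have h3 : R.countP (fun t => t ≤ 1) = l.countP (fun t => decide (t ≤ 1)) := by
      conv_lhs => rw [← Multiset.sort_eq R (· ≤ ·)]
      exact Multiset.coe_countP (fun t : ℝ => t ≤ 1) _
    rw [h3] at hcount
    exact hcount
  exact sorted_getD_le' hsorted hcount'

end aux

/-- For a layered path graph G (first layer a singleton, each layer a disjoint union of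
undirected paths, inter-layer edges going one layer down), 0 ≤ λ₂(L_G) ≤ 1. -/


theorem stmt_11 {V : Type*} [Fintype V] [DecidableEq V] (m : ℕ) (hm : 0 < m)
    (layer : V → Fin m) (E : V → V → Prop)
    (hsurj : Function.Surjective layer)
    (hirr : ∀ v, ¬ E v v)
    (hlayered : ∀ u v, E u v → layer u = layer v ∨ (layer u).1 + 1 = (layer v).1)
    (htop : ∃! v, layer v = ⟨0, hm⟩)
    (hundir : ∀ u v, layer u = layer v → (E u v ↔ E v u))
    (hpaths : IsPathsUnion (intraG layer E)) :
    0 ≤ lamRe (lap (edgeW E)) 1 ∧ lamRe (lap (edgeW E)) 1 ≤ 1 := by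
  classical
  set w : V → V → ℝ := edgeW E with hwdef
  have hw0 : ∀ u v, 0 ≤ w u v := by
    intro u v; rw [hwdef]; unfold edgeW; split <;> norm_num
  have hw1 : ∀ u v, w u v ≤ 1 := by
    intro u v; rw [hwdef]; unfold edgeW; split <;> norm_num
  have hwnot : ∀ u v, ¬ E u v → w u v = 0 := by
    intro u v h; rw [hwdef]; unfold edgeW; exact if_neg h
  have hwdiag : ∀ v, w v v = 0 := fun v => hwnot v v (hirr v)
  set L : Matrix V V ℝ := lap w with hL
  -- the roots multiset
  unfold lamRe
  constructor
  · -- lower bound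
    apply getD_one_nonneg'
    intro x hx
    obtain ⟨z, hz, rfl⟩ := Multiset.mem_map.mp hx
    exact re_nonneg_of_root' w hw0 hwdiag (Polynomial.mem_roots'.mp hz).2
  · -- upper bound
    by_cases hm2 : 2 ≤ m
    · -- m>=2
      -- m ≥ 2 case
      have h1m : 1 < m := by omega
      set b : V → (Fin m)ᵒᵈ := fun v => OrderDual.toDual (layer v) with hb
      set a₀ : (Fin m)ᵒᵈ := OrderDual.toDual ⟨0, hm⟩ with ha₀def
      set a₁ : (Fin m)ᵒᵈ := OrderDual.toDual ⟨1, h1m⟩ with ha₁def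
      obtain ⟨r, hr, hru⟩ := htop
      obtain ⟨v₁, hv₁⟩ := hsurj ⟨1, h1m⟩
      have hbr : b r = a₀ := congrArg OrderDual.toDual hr
      have hbv₁ : b v₁ = a₁ := congrArg OrderDual.toDual hv₁
      have hne01 : a₀ ≠ a₁ := by
        intro h
        have h2 : (⟨0, hm⟩ : Fin m) = ⟨1, h1m⟩ := OrderDual.toDual_inj.mp h
        simp [Fin.ext_iff] at h2
      have hBT : L.BlockTriangular b := by
        intro i j hij
        have hlt : layer i < layer j := hij
        have hnij : i ≠ j := by
          intro h; subst h; exact lt_irrefl _ hlt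
        show L i j = 0
        rw [hL]
        show (if i = j then (∑ k, w k i) - w i i else - w j i) = 0
        rw [if_neg hnij, neg_eq_zero]
        apply hwnot
        intro hE
        rcases hlayered _ _ hE with h | h
        · rw [h] at hlt; exact lt_irrefl _ hlt
        · have h2 := Fin.lt_def.mp hlt
          omega
      have ha₀ : a₀ ∈ Finset.univ.image b :=
        Finset.mem_image.mpr ⟨r, Finset.mem_univ r, hbr⟩
      have ha₁ : a₁ ∈ Finset.univ.image b :=
        Finset.mem_image.mpr ⟨v₁, Finset.mem_univ v₁, hbv₁⟩
      -- block a₀ has root 0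
      haveI hne₀ : Nonempty {v // b v = a₀} := ⟨⟨r, hbr⟩⟩
      haveI hne₁ : Nonempty {v // b v = a₁} := ⟨⟨v₁, hbv₁⟩⟩
      have hp₀ : (L.toSquareBlock b a₀).charpoly.IsRoot 0 := by
        have hblk0 : L.toSquareBlock b a₀ = 0 := by
          ext i j
          have hi : layer i.1 = ⟨0, hm⟩ := OrderDual.toDual_inj.mp i.2
          have hj : layer j.1 = ⟨0, hm⟩ := OrderDual.toDual_inj.mp j.2
          have hij : i = j := Subtype.ext (by rw [hru i.1 hi, hru j.1 hj])
          subst hij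
          show L.toSquareBlock b a₀ i i = 0
          rw [Matrix.toSquareBlock_def]
          show L i.1 i.1 = 0
          rw [hL]
          show (if i.1 = i.1 then (∑ k, w k i.1) - w i.1 i.1 else - w i.1 i.1) = 0
          rw [if_pos rfl, hwdiag, sub_zero]
          apply Finset.sum_eq_zero
          intro k _
          apply hwnot
          intro hE
          rcases hlayered _ _ hE with h | h
          · have hk : k = i.1 := by
              rw [hru k (h.trans hi), hru i.1 hi]
            exact hirr i.1 (hk ▸ hE)
          · rw [hi] at h; simp at h
        rw [Polynomial.IsRoot.def, eval_charpoly', hblk0, sub_zero]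
        have : Matrix.diagonal (fun _ : {v // b v = a₀} => (0:ℝ)) = 0 := Matrix.diagonal_zero
        rw [this]
        exact Matrix.det_zero
      -- block a₁ is symmetric with small quadratic form
      have hlay1 : ∀ i : {v // b v = a₁}, layer i.1 = ⟨1, h1m⟩ :=
        fun i => OrderDual.toDual_inj.mp i.2
      have hsymB : (L.toSquareBlock b a₁).IsHermitian := by
        show (L.toSquareBlock b a₁).conjTranspose = L.toSquareBlock b a₁
        ext i j
        rw [Matrix.conjTranspose_apply, star_trivial]
        rw [Matrix.toSquareBlock_def]
        by_cases hij : i = j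
        · subst hij; rfl
        · have hij' : i.1 ≠ j.1 := fun h => hij (Subtype.ext h)
          show L j.1 i.1 = L i.1 j.1
          rw [hL]
          show (if j.1 = i.1 then (∑ k, w k j.1) - w j.1 j.1 else - w i.1 j.1)
            = (if i.1 = j.1 then (∑ k, w k i.1) - w i.1 i.1 else - w j.1 i.1)
          rw [if_neg (Ne.symm hij'), if_neg hij']
          have hlayeq : layer i.1 = layer j.1 := by rw [hlay1 i, hlay1 j]
          have : w i.1 j.1 = w j.1 i.1 := by
            rw [hwdef]; unfold edgeW
            exact if_congr (hundir _ _ hlayeq) rfl rfl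
          rw [this]
      have hLsplit : ∀ x y : V, L x y = (if x = y then ∑ k, w k x else 0) - w y x := by
        intro x y
        rw [hL]
        show (if x = y then (∑ k, w k x) - w x x else - w y x)
          = (if x = y then ∑ k, w k x else 0) - w y x
        by_cases h : x = y
        · subst h; rw [if_pos rfl, if_pos rfl, hwdiag, sub_zero]
        · rw [if_neg h, if_neg h]; ring
      have hsumB : ∑ i : {v // b v = a₁}, ∑ j : {v // b v = a₁}, (L.toSquareBlock b a₁) i j
          ≤ (Fintype.card {v // b v = a₁} : ℝ) := by
        have hrow : ∀ i : {v // b v = a₁}, (∑ j, (L.toSquareBlock b a₁) i j) ≤ 1 := by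
          intro i
          have step1 : ∀ j : {v // b v = a₁},
              (L.toSquareBlock b a₁) i j
                = (if i = j then ∑ k : V, w k i.1 else 0) - w j.1 i.1 := by
            intro j
            rw [Matrix.toSquareBlock_def]
            show L i.1 j.1 = _
            rw [hLsplit i.1 j.1]
            congr 1
            exact if_congr Subtype.ext_iff.symm rfl rfl
          rw [Finset.sum_congr rfl (fun j _ => step1 j), Finset.sum_sub_distrib,
            Finset.sum_ite_eq Finset.univ i (fun _ => ∑ k, w k i.1), if_pos (Finset.mem_univ i)]
          set s : Finset V := Finset.univ.filter (fun v => b v = a₁) with hs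
          have hsub2 : ∑ j : {v // b v = a₁}, w j.1 i.1 = ∑ v ∈ s, w v i.1 := by
            rw [Finset.sum_subtype s (p := fun v => b v = a₁) (by simp [hs]) (fun v => w v i.1)]
          rw [hsub2, ← Finset.sum_sdiff_eq_sub (Finset.subset_univ s)]
          calc ∑ k ∈ Finset.univ \ s, w k i.1
              ≤ ∑ k ∈ Finset.univ \ s, (if r = k then 1 else 0) := by
                apply Finset.sum_le_sum
                intro k hk
                have hks : k ∉ s := (Finset.mem_sdiff.mp hk).2
                by_cases hrk : r = k
                · rw [if_pos hrk]; exact hw1 _ _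
                · rw [if_neg hrk]
                  rw [hwnot]
                  intro hE
                  rcases hlayered _ _ hE with h | h
                  · exact hks (Finset.mem_filter.mpr ⟨Finset.mem_univ k,
                      by rw [hb]; exact congrArg OrderDual.toDual (h.trans (hlay1 i))⟩)
                  · rw [hlay1 i] at h
                    have h' : (layer k).val + 1 = 1 := h
                    have hk0 : layer k = ⟨0, hm⟩ :=
                      Fin.ext (show (layer k).val = (0:ℕ) by omega)
                    exact hrk ((hru k hk0).symm)
            _ ≤ 1 := by
                rw [Finset.sum_ite_eq]
                split <;> norm_num
        calc ∑ i : {v // b v = a₁}, ∑ j : {v // b v = a₁}, (L.toSquareBlock b a₁) i j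
            ≤ ∑ _i : {v // b v = a₁}, (1:ℝ) := Finset.sum_le_sum (fun i _ => hrow i)
          _ = (Fintype.card {v // b v = a₁} : ℝ) := by
              simp [Finset.card_univ]
      obtain ⟨μ, hμ1, hμroot⟩ := exists_root_le_one' _ hsymB hsumB
      -- charpoly factorization
      have hfac : L.charpoly = ∏ a ∈ Finset.univ.image b, (L.toSquareBlock b a).charpoly :=
        hBT.charpoly
      have hsubset : ({a₀, a₁} : Finset ((Fin m)ᵒᵈ)) ⊆ Finset.univ.image b := by
        intro t ht
        rcases Finset.mem_insert.mp ht with h | h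
        · subst h; exact ha₀
        · rw [Finset.mem_singleton.mp h]; exact ha₁
      have hdvd : (L.toSquareBlock b a₀).charpoly * (L.toSquareBlock b a₁).charpoly
          ∣ L.charpoly := by
        rw [hfac]
        have h7 := Finset.prod_dvd_prod_of_subset ({a₀, a₁} : Finset ((Fin m)ᵒᵈ))
          (Finset.univ.image b) (fun a => (L.toSquareBlock b a).charpoly) hsubset
        rwa [Finset.prod_pair hne01] at h7
      have hcharc : (L.map (fun x : ℝ => (x : ℂ))).charpoly
          = L.charpoly.map Complex.ofRealHom := by
        have : L.map (fun x : ℝ => (x : ℂ)) = L.map Complex.ofRealHom := rfl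
        rw [this, Matrix.charpoly_map]
      have hm0 : (L.toSquareBlock b a₀).charpoly.map Complex.ofRealHom ≠ 0 :=
        ((Matrix.charpoly_monic _).map _).ne_zero
      have hm1' : (L.toSquareBlock b a₁).charpoly.map Complex.ofRealHom ≠ 0 :=
        ((Matrix.charpoly_monic _).map _).ne_zero
      have hrootsle : ((L.toSquareBlock b a₀).charpoly.map Complex.ofRealHom).roots
          + ((L.toSquareBlock b a₁).charpoly.map Complex.ofRealHom).roots
          ≤ (L.map (fun x : ℝ => (x : ℂ))).charpoly.roots := by
        rw [← Polynomial.roots_mul (mul_ne_zero hm0 hm1')]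
        apply Polynomial.roots.le_of_dvd
        · rw [hcharc]
          exact ((Matrix.charpoly_monic _).map _).ne_zero
        · rw [hcharc, ← Polynomial.map_mul]
          have h5 := map_dvd (Polynomial.mapRingHom Complex.ofRealHom) hdvd
          simpa using h5
      have h0mem : (0:ℂ) ∈ ((L.toSquareBlock b a₀).charpoly.map Complex.ofRealHom).roots := by
        rw [Polynomial.mem_roots']
        refine ⟨hm0, ?_⟩
        have := hp₀.map (f := Complex.ofRealHom)
        simpa using this
      have hμmem : ((μ:ℂ)) ∈ ((L.toSquareBlock b a₁).charpoly.map Complex.ofRealHom).roots := by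
        rw [Polynomial.mem_roots']
        exact ⟨hm1', hμroot.map (f := Complex.ofRealHom)⟩
      have hle2 : ({(0:ℂ), (μ:ℂ)} : Multiset ℂ)
          ≤ (L.map (fun x : ℝ => (x : ℂ))).charpoly.roots := by
        refine le_trans ?_ hrootsle
        rw [Multiset.insert_eq_cons, ← Multiset.singleton_add]
        exact add_le_add (Multiset.singleton_le.mpr h0mem)
          (Multiset.singleton_le.mpr hμmem)
      have hlere : ({(0:ℝ), μ} : Multiset ℝ)
          ≤ Multiset.map Complex.re (L.map (fun x : ℝ => (x : ℂ))).charpoly.roots := by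
        have h6 := Multiset.map_le_map (f := Complex.re) hle2
        simpa using h6
      exact getD_one_le' hlere zero_le_one hμ1
    · -- m = 1
      have hm1 : m = 1 := by omega
      subst hm1
      have hsub : Subsingleton V := by
        obtain ⟨r, hr, hru⟩ := htop
        refine ⟨fun a b => ?_⟩
        rw [hru a (Subsingleton.elim _ _), hru b (Subsingleton.elim _ _)]
      have hcard : Fintype.card V ≤ 1 := Fintype.card_le_one_iff_subsingleton.mpr hsub
      have hlen : ((((L.map (fun x : ℝ => (x : ℂ))).charpoly.roots.map
          Complex.re)).sort (· ≤ ·)).length ≤ 1 := by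
        rw [Multiset.length_sort, Multiset.card_map]
        calc Multiset.card (L.map (fun x : ℝ => (x : ℂ))).charpoly.roots
            ≤ (L.map (fun x : ℝ => (x : ℂ))).charpoly.natDegree :=
              Polynomial.card_roots' _
          _ = Fintype.card V := Matrix.charpoly_natDegree_eq_dim _
          _ ≤ 1 := hcard
      rw [List.getD_eq_default _ _ hlen]
      norm_num
end

section
/- Let P be a path graph on v₁, ..., vₙ and let d↓ : V(P) → {0, 1}. Then λ₂(L_{CP^{d↓}}) ≤ 1, where CP^{d↓} is the cone of P with weights d↓. -/
open Polynomial Matrix in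
/-- The principal submatrix of the cone Laplacian obtained by deleting the cone vertex. -/
noncomputable def Bm (n : ℕ) (f : Fin n → ℕ) : Matrix (Fin n) (Fin n) ℝ :=
  (lap (coneW (pathW n) (fun v => (f v : ℝ)))).submatrix some some

lemma aux_list_sorted (l : List ℝ) (hs : l.Pairwise (· ≤ ·))
    (hc : 2 ≤ l.countP (fun x => decide (x ≤ 1))) : l.getD 1 0 ≤ 1 := by
  match l with
  | [] => simp at hc
  | [a] =>
    have := List.countP_le_length (p := fun x : ℝ => decide (x ≤ 1)) (l := [a])
    simp only [List.length_singleton] at this; omega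
  | a :: b :: t =>
    show b ≤ 1
    by_contra hb
    push_neg at hb
    have ht : ∀ x ∈ b :: t, ¬ (x ≤ 1) := by
      intro x hx
      rcases List.mem_cons.mp hx with rfl | hx
      · exact fun h => absurd hb (not_lt.mpr h)
      · have : b ≤ x := List.rel_of_pairwise_cons hs.of_cons hx
        intro h; linarith
    have h0 : (b :: t).countP (fun x => decide (x ≤ 1)) = 0 :=
      List.countP_eq_zero.mpr (by intro x hx; simpa using ht x hx)
    rw [List.countP_cons, h0] at hc
    split at hc <;> omega

lemma aux_sort (s : Multiset ℝ) (b : ℝ) (hb : b ∈ s) (hb1 : b ≤ 1) :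
    ((0 ::ₘ s).sort (· ≤ ·)).getD 1 0 ≤ 1 := by
  apply aux_list_sorted _ (Multiset.pairwise_sort _ _)
  have h3 : 0 < s.countP (· ≤ 1) := Multiset.countP_pos.mpr ⟨b, hb, hb1⟩
  rw [show (fun x : ℝ => decide (x ≤ 1)) = fun x => decide ((· ≤ 1) x) from rfl,
    ← Multiset.coe_countP, Multiset.sort_eq,
    Multiset.countP_cons, if_pos (show (0:ℝ) ≤ 1 by norm_num)]
  omega

open Polynomial Matrix in
lemma aux_eval_charpoly {m : Type*} [Fintype m] [DecidableEq m]
    (M : Matrix m m ℝ) (t : ℝ) : M.charpoly.eval t = (t • (1 : Matrix m m ℝ) - M).det := by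
  rw [Matrix.charpoly, ← Polynomial.coe_evalRingHom, RingHom.map_det]
  congr 1
  ext i j
  by_cases h : i = j
  · subst h; simp [charmatrix_apply_eq, Matrix.one_apply_eq]
  · simp [charmatrix_apply_ne _ _ _ h, Matrix.one_apply_ne h]

open Polynomial Matrix in
lemma charpoly_factor (n : ℕ) (f : Fin n → ℕ) :
    (lap (coneW (pathW n) (fun v => (f v : ℝ)))).charpoly = (Bm n f).charpoly * X := by
  set A := lap (coneW (pathW n) (fun v => (f v : ℝ))) with hA
  have h : reindex (Equiv.optionEquivSumPUnit.{0,0} (Fin n))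
        (Equiv.optionEquivSumPUnit.{0,0} (Fin n)) A
      = fromBlocks (Bm n f) (Matrix.of fun i (_ : PUnit.{1}) => -((f i : ℝ))) 0 0 := by
    ext (i|i) (j|j) <;>
      simp [hA, Bm, lap, coneW, Fintype.sum_option, fromBlocks]
  rw [← Matrix.charpoly_reindex (Equiv.optionEquivSumPUnit.{0,0} (Fin n)) A, h,
    Matrix.charpoly_fromBlocks_zero₂₁]
  congr 1
  rw [Matrix.charpoly, Matrix.det_unique]
  simp [charmatrix_apply_eq]

lemma pathW_symm (n : ℕ) (i j : Fin n) : pathW n i j = pathW n j i := by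
  simp only [pathW, or_comm]

open Polynomial Matrix in
lemma Bm_isHermitian (n : ℕ) (f : Fin n → ℕ) : (Bm n f).IsHermitian := by
  ext i j
  by_cases h : i = j
  · subst h; rfl
  · simp only [conjTranspose_apply, Bm, submatrix_apply, lap, of_apply, star_trivial]
    rw [if_neg (by simpa using Ne.symm h), if_neg (by simpa using h)]
    show -(coneW (pathW n) _ (some i) (some j)) = -(coneW (pathW n) _ (some j) (some i))
    show -(pathW n i j) = -(pathW n j i)
    rw [pathW_symm]

open Polynomial Matrix in
lemma Bm_rowsum (n : ℕ) (f : Fin n → ℕ) (i : Fin n) :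
    ∑ j, Bm n f i j = (f i : ℝ) := by
  have hent : ∀ j, Bm n f i j =
      (if i = j then ((f i : ℝ) + ∑ k, pathW n k i) else 0) - pathW n j i := by
    intro j
    by_cases h : i = j
    · subst h
      simp [Bm, lap, coneW, Fintype.sum_option]
    · simp [Bm, lap, coneW, h]
  rw [Finset.sum_congr rfl (fun j _ => hent j), Finset.sum_sub_distrib]
  simp

open Polynomial Matrix in
lemma exists_root_le_one (n : ℕ) (hn : 0 < n) (f : Fin n → ℕ)
    (hf : ∀ i, f i = 0 ∨ f i = 1) :
    ∃ μ : ℝ, μ ≤ 1 ∧ (Bm n f).charpoly.eval μ = 0 := by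
  have hB : (Bm n f).IsHermitian := Bm_isHermitian n f
  set B := Bm n f with hBdef
  set C : Matrix (Fin n) (Fin n) ℝ := B - 1 with hCdef
  have hC : C.IsHermitian := hB.sub Matrix.isHermitian_one
  have ones_ne : (fun _ : Fin n => (1:ℝ)) ≠ 0 := by
    intro h
    have := congrFun h ⟨0, hn⟩
    norm_num at this
  have hmul : C *ᵥ (fun _ => (1:ℝ)) = fun i => (f i : ℝ) - 1 := by
    funext i
    rw [hCdef, Matrix.sub_mulVec, Matrix.one_mulVec]
    have : B *ᵥ (fun _ => (1:ℝ)) = fun i => (f i : ℝ) := by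
      funext i
      simp [Matrix.mulVec, dotProduct, hBdef, Bm_rowsum n f i]
    rw [this]
    simp
  obtain ⟨i, hi⟩ : ∃ i, hC.eigenvalues i ≤ 0 := by
    by_contra hcon
    push_neg at hcon
    have hPSD : C.PosSemidef := hC.posSemidef_iff_eigenvalues_nonneg.mpr fun i => (hcon i).le
    have hdet : C.det ≠ 0 := by
      rw [hC.det_eq_prod_eigenvalues]
      exact Finset.prod_ne_zero_iff.mpr fun i _ => RCLike.ofReal_ne_zero.mpr (hcon i).ne'
    have hq : (star (fun _ : Fin n => (1:ℝ))) ⬝ᵥ (C *ᵥ fun _ => (1:ℝ)) ≤ 0 := by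
      have hstar : star (fun _ : Fin n => (1:ℝ)) = fun _ : Fin n => (1:ℝ) := by
        funext i; simp
      rw [hstar, hmul]
      simp only [dotProduct, one_mul]
      apply Finset.sum_nonpos
      intro i _
      rcases hf i with h | h <;> rw [h] <;> norm_num
    have h0 := le_antisymm hq (hPSD.dotProduct_mulVec_nonneg _)
    have hker := (hPSD.dotProduct_mulVec_zero_iff _).mp h0
    exact hdet (Matrix.exists_mulVec_eq_zero_iff.mp ⟨_, ones_ne, hker⟩)
  refine ⟨hC.eigenvalues i + 1, by linarith, ?_⟩
  rw [aux_eval_charpoly]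
  apply Matrix.exists_mulVec_eq_zero_iff.mp
  refine ⟨⇑(hC.eigenvectorBasis i), ?_, ?_⟩
  · have := (hC.eigenvectorBasis).toBasis.ne_zero i
    simpa using this
  · rw [Matrix.sub_mulVec, Matrix.smul_mulVec, Matrix.one_mulVec]
    have hv := hC.mulVec_eigenvectorBasis i
    have hBC : B = C + 1 := by rw [hCdef]; abel
    have hBv : B *ᵥ ⇑(hC.eigenvectorBasis i) =
        (hC.eigenvalues i) • ⇑(hC.eigenvectorBasis i) + ⇑(hC.eigenvectorBasis i) := by
      rw [hBC, Matrix.add_mulVec, Matrix.one_mulVec, hv]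
    rw [hBv, add_smul, one_smul]
    abel

open Polynomial Matrix in
/-- If every cone weight is 0 or 1, then λ₂ of the cone of a path graph is at most 1. -/
theorem stmt_16 (n : ℕ) (hn : 0 < n) (f : Fin n → ℕ) (hf : ∀ i, f i = 0 ∨ f i = 1) :
    lamRe (lap (coneW (pathW n) (fun v => (f v : ℝ)))) 1 ≤ 1 := by
  obtain ⟨μ, hμ1, hμroot⟩ := exists_root_le_one n hn f hf
  unfold lamRe
  set A := lap (coneW (pathW n) fun v => (f v : ℝ)) with hAdef
  have hq0 : ((Bm n f).charpoly.map (Complex.ofRealHom : ℝ →+* ℂ)) ≠ 0 :=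
    ((Matrix.charpoly_monic _).map _).ne_zero
  have hcp : (A.map (fun x : ℝ => (x : ℂ))).charpoly
      = ((Bm n f).charpoly.map Complex.ofRealHom) * X := by
    have : A.map (fun x : ℝ => (x : ℂ)) = A.map (Complex.ofRealHom : ℝ →+* ℂ) := rfl
    rw [this, Matrix.charpoly_map, hAdef, charpoly_factor, Polynomial.map_mul,
      Polynomial.map_X]
  have hroots : (A.map (fun x : ℝ => (x : ℂ))).charpoly.roots
      = ((Bm n f).charpoly.map Complex.ofRealHom).roots + {0} := by
    rw [hcp, Polynomial.roots_mul (mul_ne_zero hq0 Polynomial.X_ne_zero), Polynomial.roots_X]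
  rw [hroots, Multiset.map_add]
  have h0map : (({0} : Multiset ℂ).map Complex.re) = ({0} : Multiset ℝ) := by simp
  rw [h0map, add_comm, Multiset.singleton_add]
  apply aux_sort _ μ _ hμ1
  refine Multiset.mem_map.mpr ⟨(μ : ℂ), ?_, Complex.ofReal_re μ⟩
  rw [Polynomial.mem_roots hq0]
  show Polynomial.IsRoot _ (Complex.ofRealHom μ)
  rw [Polynomial.IsRoot, Polynomial.eval_map, Polynomial.eval₂_at_apply, hμroot]
  simp
end
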